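/- The Laurent polynomials p_n¹, p_n², q_n¹, q_n² have real coefficients, and for every n ≥ 0 and x ∈ ℤ, q_n(ψ;x) = |ψ₁|²[c_x(p_n¹)² + c_x(p_n²)²] + |ψ₂|²[c_x(q_n¹)² + c_x(q_n²)²] + 2 Re(ψ₁ ψ̄₂)[c_x(p_n¹) c_x(q_n¹) + c_x(p_n²) c_x(q_n²)]. -/

import Mathlib

/-- The Laurent polynomial `s(z + z⁻¹)/2`. -/
noncomputable def zArg (s : ℝ) : LaurentPolynomial ℂ :=
  ((s : ℂ) / 2) • (LaurentPolynomial.T 1 + LaurentPolynomial.T (-1))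

/-- The Laurent polynomial `Tₙ(s(z + z⁻¹)/2)` (Chebyshev polynomial of the first kind). -/
noncomputable def chebTz (s : ℝ) (n : ℤ) : LaurentPolynomial ℂ :=
  Polynomial.aeval (zArg s) (Polynomial.Chebyshev.T ℂ n)

/-- The Laurent polynomial `Uₙ(s(z + z⁻¹)/2)` (Chebyshev polynomial of the second kind). -/
noncomputable def chebUz (s : ℝ) (n : ℤ) : LaurentPolynomial ℂ :=
  Polynomial.aeval (zArg s) (Polynomial.Chebyshev.U ℂ n)

/-- `p_n¹(z) = Tₙ(s(z+z⁻¹)/2) + (s/2)(z−z⁻¹) U_{n−1}(s(z+z⁻¹)/2)`. -/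
noncomputable def pn1 (s : ℝ) (n : ℕ) : LaurentPolynomial ℂ :=
  chebTz s (n : ℤ) +
    ((s : ℂ) / 2) • ((LaurentPolynomial.T 1 - LaurentPolynomial.T (-1)) * chebUz s ((n : ℤ) - 1))

/-- `p_n²(z) = t z U_{n−1}(s(z+z⁻¹)/2)`. -/
noncomputable def pn2 (s t : ℝ) (n : ℕ) : LaurentPolynomial ℂ :=
  (t : ℂ) • (LaurentPolynomial.T 1 * chebUz s ((n : ℤ) - 1))

/-- `q_n¹(z) = −t z⁻¹ U_{n−1}(s(z+z⁻¹)/2)`. -/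
noncomputable def qn1 (s t : ℝ) (n : ℕ) : LaurentPolynomial ℂ :=
  -((t : ℂ) • (LaurentPolynomial.T (-1) * chebUz s ((n : ℤ) - 1)))

/-- `q_n²(z) = Tₙ(s(z+z⁻¹)/2) − (s/2)(z−z⁻¹) U_{n−1}(s(z+z⁻¹)/2)`. -/
noncomputable def qn2 (s : ℝ) (n : ℕ) : LaurentPolynomial ℂ :=
  chebTz s (n : ℤ) -
    ((s : ℂ) / 2) • ((LaurentPolynomial.T 1 - LaurentPolynomial.T (-1)) * chebUz s ((n : ℤ) - 1))

/-!
Write `e₁ˣ = Vˣ e` and `e₂ˣ = ε Vˣ e`. Since `σ` commutes with `V`, anticommutes with `W` and fixes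
`e`, it acts as `+1` on the `e₁ˣ` and as `-1` on the `e₂ˣ`; there `T = X + iσY` acts as `V` and `V*`
respectively, which identifies `e₁ˣ = Tˣ e` and `e₂ˣ = Tˣ ε e`. From `W* = -W` and `VWV = W`, the
adjoint `U* = sV* - tW` sends `e₁ˣ ↦ s e₁^(x-1) - t e₂^(x+1)` and `e₂ˣ ↦ t e₁^(x-1) + s e₂^(x+1)`,
so the amplitudes `⟨eᵢˣ, UⁿΨ⟩` satisfy a two-component recurrence in `n`. By the Chebyshev
recurrences the coefficients of `ψ₁ p_nⁱ + ψ₂ q_nⁱ` satisfy the same one, and both start at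
`(ψ₁ δₓ₀, ψ₂ δₓ₀)`: `⟨e₁ˣ, e⟩ = δₓ₀` by the hypothesis on `⟨Vˣe, e⟩`, and `e₁ˣ ⟂ e₂⁰` as
eigenvectors of `σ` for different eigenvalues. The recurrence has real coefficients, so the
coefficients stay real, and expanding the two squared moduli gives the formula.
-/

open ContinuousLinearMap

def WalkRecurrence (s t : ℝ) (a b : ℕ → ℤ → ℂ) : Prop :=
  ∀ n x, a (n + 1) x = s * a n (x - 1) - t * b n (x + 1) ∧
    b (n + 1) x = t * a n (x - 1) + s * b n (x + 1)

namespace WalkRecurrence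

variable {s t : ℝ} {a b a' b' : ℕ → ℤ → ℂ}

theorem linear_comb (h : WalkRecurrence s t a b) (h' : WalkRecurrence s t a' b') (c c' : ℂ) :
    WalkRecurrence s t (fun n x => c * a n x + c' * a' n x)
      (fun n x => c * b n x + c' * b' n x) := by
  intro n x
  obtain ⟨ha, hb⟩ := h n x
  obtain ⟨ha', hb'⟩ := h' n x
  constructor
  · dsimp only; rw [ha, ha']; ring
  · dsimp only; rw [hb, hb']; ring

theorem im_eq_zero (h : WalkRecurrence s t a b) (h0 : ∀ x, (a 0 x).im = 0 ∧ (b 0 x).im = 0) :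
    ∀ n x, (a n x).im = 0 ∧ (b n x).im = 0 := by
  intro n
  induction n with
  | zero => exact h0
  | succ n ih =>
    intro x
    obtain ⟨ha, hb⟩ := h n x
    obtain ⟨ha₁, -⟩ := ih (x - 1)
    obtain ⟨-, hb₁⟩ := ih (x + 1)
    simp [ha, hb, ha₁, hb₁]

theorem eq_of_init_eq (h : WalkRecurrence s t a b) (h' : WalkRecurrence s t a' b')
    (ha : a 0 = a' 0) (hb : b 0 = b' 0) : ∀ n, a n = a' n ∧ b n = b' n := by
  intro n
  induction n with
  | zero => exact ⟨ha, hb⟩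
  | succ n ih =>
    constructor <;> funext x
    · rw [(h n x).1, (h' n x).1, ih.1, ih.2]
    · rw [(h n x).2, (h' n x).2, ih.1, ih.2]

end WalkRecurrence

section Chebyshev

variable (s : ℝ) (n : ℤ)

theorem chebTz_add_one :
    chebTz s (n + 1) = zArg s * chebTz s n - (1 - zArg s ^ 2) * chebUz s (n - 1) := by
  have h := congrArg (Polynomial.aeval (zArg s))
    (Polynomial.Chebyshev.T_eq_X_mul_T_sub_pol_U ℂ (n - 1))
  rw [show n - 1 + 2 = n + 1 by ring, sub_add_cancel] at h
  simp only [map_sub, map_mul, map_one, map_pow, Polynomial.aeval_X] at h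
  exact h

theorem chebUz_eq :
    chebUz s n = zArg s * chebUz s (n - 1) + chebTz s n := by
  have h := congrArg (Polynomial.aeval (zArg s))
    (Polynomial.Chebyshev.U_eq_X_mul_U_add_T ℂ (n - 1))
  rw [sub_add_cancel] at h
  simp only [map_add, map_mul, Polynomial.aeval_X] at h
  exact h

theorem chebTz_zero : chebTz s 0 = 1 := by
  rw [chebTz, Polynomial.Chebyshev.T_zero, map_one]

theorem chebUz_neg_one : chebUz s (-1) = 0 := by
  rw [chebUz, Polynomial.Chebyshev.U_neg_one, map_zero]

end Chebyshev

section Laurent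

open LaurentPolynomial

namespace LaurentPolynomial

variable {R : Type*} [Semiring R]

theorem coeff_T_mul (k : ℤ) (p : R[T;T⁻¹]) (x : ℤ) : (T k * p).coeff x = p.coeff (x - k) := by
  rw [T, AddMonoidAlgebra.coeff_single_mul_apply, one_mul, neg_add_eq_sub]

theorem coeff_one (x : ℤ) : (1 : R[T;T⁻¹]).coeff x = if x = 0 then 1 else 0 := by
  rw [← T_zero, T_apply]
  simp only [eq_comm]

theorem T_one_mul_T_neg_one : (T 1 * T (-1) : R[T;T⁻¹]) = 1 := by
  rw [← T_add, add_neg_cancel, T_zero]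

end LaurentPolynomial

theorem WalkRecurrence.of_laurent {s t : ℝ} {P Q : ℕ → ℂ[T;T⁻¹]}
    (hP : ∀ n, P (n + 1) = (s : ℂ) • (T 1 * P n) - (t : ℂ) • (T (-1) * Q n))
    (hQ : ∀ n, Q (n + 1) = (t : ℂ) • (T 1 * P n) + (s : ℂ) • (T (-1) * Q n)) :
    WalkRecurrence s t (fun n x => (P n).coeff x) (fun n x => (Q n).coeff x) := by
  intro n x
  simp only [hP, hQ, AddMonoidAlgebra.coeff_sub, AddMonoidAlgebra.coeff_add, Finsupp.sub_apply,
    Finsupp.add_apply, AddMonoidAlgebra.coeff_smul_apply, smul_eq_mul, coeff_T_mul, sub_neg_eq_add,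
    and_self]

variable {s t : ℝ}

theorem zArg_eq_C_mul (s : ℝ) : zArg s = C ((s : ℂ) / 2) * (T 1 + T (-1)) :=
  smul_eq_C_mul _ _

theorem C_eq_two_mul_C_half (a : ℂ) : C a = 2 * C (a / 2) := by
  rw [← map_ofNat C 2, ← map_mul, mul_div_cancel₀ _ two_ne_zero]

theorem two_mul_C_half_sq_add_C_sq (hst : s ^ 2 + t ^ 2 = 1) :
    (2 * C ((s : ℂ) / 2)) ^ 2 + C (t : ℂ) ^ 2 = 1 := by
  rw [← C_eq_two_mul_C_half, ← map_pow, ← map_pow, ← map_add, ← map_one C]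
  exact_mod_cast congrArg C (congrArg Complex.ofReal hst)

variable (n : ℕ)

theorem pn1_succ (hst : s ^ 2 + t ^ 2 = 1) :
    pn1 s (n + 1) = (s : ℂ) • (T 1 * pn1 s n) - (t : ℂ) • (T (-1) * pn2 s t n) := by
  have hT := chebTz_add_one s n
  have hU := chebUz_eq s n
  simp only [pn1, pn2, smul_eq_C_mul, zArg_eq_C_mul, C_eq_two_mul_C_half (s : ℂ), Nat.cast_succ,
    add_sub_cancel_right] at hT hU ⊢
  linear_combination hT + C ((s : ℂ) / 2) * (T 1 - T (-1)) * hU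
    + chebUz s (n - 1) * ((2 * C ((s : ℂ) / 2)) ^ 2 + C (t : ℂ) ^ 2) * T_one_mul_T_neg_one (R := ℂ)
    + chebUz s (n - 1) * two_mul_C_half_sq_add_C_sq hst

theorem pn2_succ :
    pn2 s t (n + 1) = (t : ℂ) • (T 1 * pn1 s n) + (s : ℂ) • (T (-1) * pn2 s t n) := by
  have hU := chebUz_eq s n
  simp only [pn1, pn2, smul_eq_C_mul, zArg_eq_C_mul, C_eq_two_mul_C_half (s : ℂ), Nat.cast_succ,
    add_sub_cancel_right] at hU ⊢
  linear_combination C (t : ℂ) * T 1 * hU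

theorem qn1_succ :
    qn1 s t (n + 1) = (s : ℂ) • (T 1 * qn1 s t n) - (t : ℂ) • (T (-1) * qn2 s n) := by
  have hU := chebUz_eq s n
  simp only [qn1, qn2, smul_eq_C_mul, zArg_eq_C_mul, C_eq_two_mul_C_half (s : ℂ), Nat.cast_succ,
    add_sub_cancel_right] at hU ⊢
  linear_combination -C (t : ℂ) * T (-1) * hU

theorem qn2_succ (hst : s ^ 2 + t ^ 2 = 1) :
    qn2 s (n + 1) = (t : ℂ) • (T 1 * qn1 s t n) + (s : ℂ) • (T (-1) * qn2 s n) := by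
  have hT := chebTz_add_one s n
  have hU := chebUz_eq s n
  simp only [qn1, qn2, smul_eq_C_mul, zArg_eq_C_mul, C_eq_two_mul_C_half (s : ℂ), Nat.cast_succ,
    add_sub_cancel_right] at hT hU ⊢
  linear_combination hT - C ((s : ℂ) / 2) * (T 1 - T (-1)) * hU
    + chebUz s (n - 1) * ((2 * C ((s : ℂ) / 2)) ^ 2 + C (t : ℂ) ^ 2) * T_one_mul_T_neg_one (R := ℂ)
    + chebUz s (n - 1) * two_mul_C_half_sq_add_C_sq hst

theorem pn1_zero : pn1 s 0 = 1 := by simp [pn1, chebTz_zero, chebUz_neg_one]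

theorem pn2_zero : pn2 s t 0 = 0 := by simp [pn2, chebUz_neg_one]

theorem qn1_zero : qn1 s t 0 = 0 := by simp [qn1, chebUz_neg_one]

theorem qn2_zero : qn2 s 0 = 1 := by simp [qn2, chebTz_zero, chebUz_neg_one]

theorem walkRecurrence_pn (hst : s ^ 2 + t ^ 2 = 1) :
    WalkRecurrence s t (fun n x => (pn1 s n).coeff x) (fun n x => (pn2 s t n).coeff x) :=
  .of_laurent (fun n => pn1_succ n hst) pn2_succ

theorem walkRecurrence_qn (hst : s ^ 2 + t ^ 2 = 1) :
    WalkRecurrence s t (fun n x => (qn1 s t n).coeff x) (fun n x => (qn2 s n).coeff x) :=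
  .of_laurent qn1_succ (fun n => qn2_succ n hst)

theorem coeff_im_eq_zero (hst : s ^ 2 + t ^ 2 = 1) (n : ℕ) (x : ℤ) :
    ((pn1 s n).coeff x).im = 0 ∧ ((pn2 s t n).coeff x).im = 0 ∧
      ((qn1 s t n).coeff x).im = 0 ∧ ((qn2 s n).coeff x).im = 0 := by
  obtain ⟨hp₁, hp₂⟩ := (walkRecurrence_pn hst).im_eq_zero
    (fun x => by simp [pn1_zero, pn2_zero, coeff_one, apply_ite]) n x
  obtain ⟨hq₁, hq₂⟩ := (walkRecurrence_qn hst).im_eq_zero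
    (fun x => by simp [qn1_zero, qn2_zero, coeff_one, apply_ite]) n x
  exact ⟨hp₁, hp₂, hq₁, hq₂⟩

end Laurent

theorem zpow_smul_eq_of_smul_eq {G α : Type*} [Group G] [MulAction G α] (g : G) (f : ℤ → α)
    (hf : ∀ m, g • f m = f (m + 1)) (x : ℤ) : g ^ x • f 0 = f x := by
  induction x using Int.induction_on with
  | zero => rw [zpow_zero, one_smul]
  | succ i ih => rw [add_comm, zpow_one_add, mul_smul, ih, hf, add_comm]
  | pred i ih =>
    have h := hf (-i - 1)
    rw [sub_add_cancel, ← ih] at h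
    rw [eq_inv_smul_iff.mpr h, smul_smul, ← zpow_neg_one, ← zpow_add, neg_add_eq_sub]

theorem mul_zpow_eq_of_mul_mul_eq {G : Type*} [Group G] {v w : G} (h : v * w * v = w) (x : ℤ) :
    w * v ^ x = v * w * v ^ (x + 1) := by
  rw [add_comm, zpow_one_add, ← mul_assoc, h]

theorem inv_mul_mul_zpow_eq {G : Type*} [Group G] {v w : G} (h : v * w * v = w) (x : ℤ) :
    v⁻¹ * (v * w * v ^ x) = v * w * v ^ (x + 1) := by
  rw [← mul_zpow_eq_of_mul_mul_eq h]; group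

theorem Commute.unitary_zpow_right {R : Type*} [Monoid R] [StarMul R] {a : R} {u : unitary R}
    (h : Commute a u) (m : ℤ) : Commute a ↑(u ^ m) := by
  have := h.units_zpow_right (u := Unitary.toUnits u) m
  rwa [← map_zpow, Unitary.val_toUnits_apply] at this

section CondShift

variable {E : Type*} [NormedAddCommGroup E] [NormedSpace ℂ E]

/-- The operator `T = X + iσY`, with `A`, `B` in the roles of `V`, `V*`. -/
noncomputable def condShift (σ A B : E →L[ℂ] E) : E →L[ℂ] E :=
  (2 : ℂ)⁻¹ • (A + B) + Complex.I • σ ∘L ((2 * Complex.I)⁻¹ • (A - B))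

theorem condShift_apply (σ A B : E →L[ℂ] E) (u : E) :
    condShift σ A B u = (2 : ℂ)⁻¹ • (A u + B u + σ (A u) - σ (B u)) := by
  have hI : Complex.I * (2 * Complex.I)⁻¹ = (2 : ℂ)⁻¹ := by field_simp
  simp only [condShift, add_apply, smul_apply, comp_apply, sub_apply, map_smul, map_sub, smul_smul,
    hI]
  module

variable {σ A B : E →L[ℂ] E} (hA : Commute σ A) (hB : Commute σ B) {u : E}
include hA hB

theorem condShift_apply_of_commute :
    condShift σ A B u = (2 : ℂ)⁻¹ • (A u + B u + A (σ u) - B (σ u)) := by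
  have hAu : σ (A u) = A (σ u) := DFunLike.congr_fun hA.eq u
  have hBu : σ (B u) = B (σ u) := DFunLike.congr_fun hB.eq u
  rw [condShift_apply, hAu, hBu]

theorem condShift_apply_of_apply_eq_self (hu : σ u = u) : condShift σ A B u = A u := by
  rw [condShift_apply_of_commute hA hB, hu]
  module

theorem condShift_apply_of_apply_eq_neg (hu : σ u = -u) : condShift σ A B u = B u := by
  rw [condShift_apply_of_commute hA hB, hu, map_neg, map_neg]
  module

end CondShift

open scoped InnerProductSpace

section Hilbert

variable {𝕜 H : Type*} [RCLike 𝕜] [NormedAddCommGroup H] [InnerProductSpace 𝕜 H] [CompleteSpace H]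

theorem inner_eq_zero_of_apply_eq_self_of_apply_eq_neg {σ : H →L[𝕜] H} (hσ : IsSelfAdjoint σ)
    {u u' : H} (hu : σ u = u) (hu' : σ u' = -u') : ⟪u, u'⟫_𝕜 = 0 := by
  refine self_eq_neg.mp ?_
  calc ⟪u, u'⟫_𝕜 = ⟪σ u, u'⟫_𝕜 := by rw [hu]
    _ = ⟪u, σ u'⟫_𝕜 := hσ.isSymmetric u u'
    _ = -⟪u, u'⟫_𝕜 := by rw [hu', inner_neg_right]

theorem Unitary.inner_smul_smul (u : unitary (H →L[𝕜] H)) (x y : H) :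
    ⟪u • x, u • y⟫_𝕜 = ⟪x, y⟫_𝕜 :=
  Unitary.inner_map_map u x y

theorem inner_zpow_smul_self {v : unitary (H →L[𝕜] H)} {e : H} (hne : ‖e‖ = 1)
    (horth : ∀ m : ℕ, 0 < m → ⟪((v : H →L[𝕜] H) ^ m) e, e⟫_𝕜 = 0) (x : ℤ) :
    ⟪v ^ x • e, e⟫_𝕜 = if x = 0 then 1 else 0 := by
  have hpos : ∀ k : ℕ, 0 < k → ⟪v ^ (k : ℤ) • e, e⟫_𝕜 = 0 := fun k hk => by
    rw [zpow_natCast, Submonoid.smul_def, SubmonoidClass.coe_pow]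
    exact horth k hk
  rcases eq_or_ne x 0 with rfl | hx
  · simp [inner_self_eq_norm_sq_to_K, hne]
  rw [if_neg hx]
  obtain ⟨k, rfl | rfl⟩ := Int.eq_nat_or_neg x
  · exact hpos k (by omega)
  · rw [zpow_neg, ← Unitary.inner_smul_smul (v ^ (k : ℤ)), smul_inv_smul, ← inner_conj_symm,
      hpos k (by omega), map_zero]

theorem inv_smul_eq_neg_smul {w : unitary (H →L[𝕜] H)} (hww : (w : H →L[𝕜] H) * w = -1) (u : H) :
    w⁻¹ • u = -(w • u) := by
  have h : w • w • u = -u := DFunLike.congr_fun hww u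
  calc w⁻¹ • u = w⁻¹ • -(w • w • u) := by rw [h, neg_neg]
    _ = -(w • u) := by rw [smul_neg, inv_smul_smul]

end Hilbert

section Walk

variable {H : Type*} [NormedAddCommGroup H] [InnerProductSpace ℂ H] [CompleteSpace H]

theorem walkRecurrence_inner {U : H →L[ℂ] H} {s t : ℝ} {e₁ e₂ : ℤ → H}
    (h₁ : ∀ x, adjoint U (e₁ x) = (s : ℂ) • e₁ (x - 1) - (t : ℂ) • e₂ (x + 1))
    (h₂ : ∀ x, adjoint U (e₂ x) = (t : ℂ) • e₁ (x - 1) + (s : ℂ) • e₂ (x + 1)) (Ψ : H) :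
    WalkRecurrence s t (fun n x => ⟪e₁ x, (U ^ n) Ψ⟫_ℂ) (fun n x => ⟪e₂ x, (U ^ n) Ψ⟫_ℂ) := by
  intro n x
  simp only [pow_succ', mul_apply_eq_comp]
  rw [← adjoint_inner_left U, ← adjoint_inner_left U, h₁, h₂]
  simp only [inner_sub_left, inner_add_left, inner_smul_left, Complex.conj_ofReal, and_self]

theorem adjoint_smul_add_smul_apply (v w : unitary (H →L[ℂ] H)) (s t : ℝ) (u : H) :
    adjoint ((s : ℂ) • (v : H →L[ℂ] H) + (t : ℂ) • (w : H →L[ℂ] H)) u =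
      (s : ℂ) • v⁻¹ • u + (t : ℂ) • w⁻¹ • u := by
  rw [map_add, map_smulₛₗ, map_smulₛₗ, Complex.conj_ofReal, Complex.conj_ofReal]
  rfl

variable {v w : unitary (H →L[ℂ] H)} (hvwv : v * w * v = w) (s t : ℝ) (e : H) (x : ℤ)
include hvwv

theorem adjoint_smul_add_smul_apply_zpow_smul (hww : (w : H →L[ℂ] H) * w = -1) :
    adjoint ((s : ℂ) • (v : H →L[ℂ] H) + (t : ℂ) • (w : H →L[ℂ] H)) (v ^ x • e) =
      (s : ℂ) • v ^ (x - 1) • e - (t : ℂ) • (v * w) • v ^ (x + 1) • e := by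
  have hv : v⁻¹ * v ^ x = v ^ (x - 1) := by group
  rw [adjoint_smul_add_smul_apply, inv_smul_eq_neg_smul hww]
  simp only [smul_smul, hv, mul_zpow_eq_of_mul_mul_eq hvwv]
  rw [smul_neg, ← sub_eq_add_neg]

theorem adjoint_smul_add_smul_apply_mul_zpow_smul :
    adjoint ((s : ℂ) • (v : H →L[ℂ] H) + (t : ℂ) • (w : H →L[ℂ] H)) ((v * w) • v ^ x • e) =
      (t : ℂ) • v ^ (x - 1) • e + (s : ℂ) • (v * w) • v ^ (x + 1) • e := by
  have hvw : v * w = w * v⁻¹ := eq_mul_inv_of_mul_eq hvwv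
  have hw : w⁻¹ * (v * w * v ^ x) = v ^ (x - 1) := by rw [hvw]; group
  rw [adjoint_smul_add_smul_apply, add_comm]
  simp only [smul_smul, inv_mul_mul_zpow_eq hvwv, hw]

end Walk

section Shift

variable {H : Type*} [NormedAddCommGroup H] [InnerProductSpace ℂ H] [CompleteSpace H]
  {σ : H →L[ℂ] H} {v w : unitary (H →L[ℂ] H)} {e : H}

theorem commute_adjoint_of_commute (hσv : Commute σ v) : Commute σ (adjoint (v : H →L[ℂ] H)) := by
  have h := hσv.unitary_zpow_right (-1)
  rw [zpow_neg_one] at h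
  exact h

theorem apply_zpow_smul_eq_self (hσv : Commute σ v) (he : σ e = e) (m : ℤ) :
    σ (v ^ m • e) = v ^ m • e := by
  have h : σ (v ^ m • e) = v ^ m • σ e := DFunLike.congr_fun (hσv.unitary_zpow_right m).eq e
  rw [h, he]

theorem apply_mul_smul_zpow_smul_eq_neg (hσv : Commute σ v) (hσw : σ * w = -(w * σ))
    (he : σ e = e) (m : ℤ) : σ ((v * w) • v ^ m • e) = -((v * w) • v ^ m • e) := by
  have h₁ : σ (v • w • v ^ m • e) = v • σ (w • v ^ m • e) := DFunLike.congr_fun hσv.eq _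
  have h₂ : σ (w • v ^ m • e) = -(w • σ (v ^ m • e)) := DFunLike.congr_fun hσw _
  rw [mul_smul, h₁, h₂, apply_zpow_smul_eq_self hσv he, smul_neg]

theorem inner_zpow_smul_smul_add_smul (hσ : IsSelfAdjoint σ) (hσv : Commute σ v)
    (hσw : σ * w = -(w * σ)) (he : σ e = e) (hne : ‖e‖ = 1)
    (horth : ∀ m : ℕ, 0 < m → ⟪((v : H →L[ℂ] H) ^ m) e, e⟫_ℂ = 0) (ψ₁ ψ₂ : ℂ) (x : ℤ) :
    ⟪v ^ x • e, ψ₁ • e + ψ₂ • (v * w) • e⟫_ℂ = ψ₁ * (if x = 0 then 1 else 0) ∧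
      ⟪(v * w) • v ^ x • e, ψ₁ • e + ψ₂ • (v * w) • e⟫_ℂ = ψ₂ * (if x = 0 then 1 else 0) := by
  have hanti := apply_mul_smul_zpow_smul_eq_neg hσv hσw he 0
  rw [zpow_zero, one_smul] at hanti
  have h₁₂ := inner_eq_zero_of_apply_eq_self_of_apply_eq_neg hσ
    (apply_zpow_smul_eq_self hσv he x) hanti
  have h₂₁ := inner_eq_zero_of_apply_eq_self_of_apply_eq_neg hσ he
    (apply_mul_smul_zpow_smul_eq_neg hσv hσw he x)
  rw [← inner_conj_symm, map_eq_zero] at h₂₁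
  simp only [inner_add_right, inner_smul_right, h₁₂, h₂₁, Unitary.inner_smul_smul,
    inner_zpow_smul_self hne horth, mul_zero, add_zero, zero_add, and_self]

variable {Tu : (H →L[ℂ] H)ˣ} (hT : (Tu : H →L[ℂ] H) = condShift σ v (adjoint (v : H →L[ℂ] H)))
  (hσv : Commute σ v)
include hT hσv

theorem units_smul_eq_of_apply_eq_self {u : H} (hu : σ u = u) : Tu • u = v • u :=
  (congrArg (· u) hT).trans
    (condShift_apply_of_apply_eq_self hσv (commute_adjoint_of_commute hσv) hu)

theorem units_smul_eq_of_apply_eq_neg {u : H} (hu : σ u = -u) : Tu • u = v⁻¹ • u :=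
  (congrArg (· u) hT).trans
    (condShift_apply_of_apply_eq_neg hσv (commute_adjoint_of_commute hσv) hu)

theorem units_zpow_smul_of_apply_eq_self (he : σ e = e) (x : ℤ) : Tu ^ x • e = v ^ x • e := by
  have h := zpow_smul_eq_of_smul_eq Tu (fun m => v ^ m • e) (fun m => by
    rw [units_smul_eq_of_apply_eq_self hT hσv (apply_zpow_smul_eq_self hσv he m), smul_smul,
      ← zpow_one_add, add_comm]) x
  rwa [zpow_zero, one_smul] at h

theorem units_zpow_smul_mul_smul (hvwv : v * w * v = w) (hσw : σ * w = -(w * σ)) (he : σ e = e)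
    (x : ℤ) : Tu ^ x • (v * w) • e = (v * w) • v ^ x • e := by
  have h := zpow_smul_eq_of_smul_eq Tu (fun m => (v * w) • v ^ m • e) (fun m => by
    rw [units_smul_eq_of_apply_eq_neg hT hσv (apply_mul_smul_zpow_smul_eq_neg hσv hσw he m)]
    simp only [smul_smul, inv_mul_mul_zpow_eq hvwv]) x
  rwa [zpow_zero, one_smul] at h

end Shift

section Amplitudes

variable {H : Type*} [NormedAddCommGroup H] [InnerProductSpace ℂ H] [CompleteSpace H]
  {σ : H →L[ℂ] H} {v w : unitary (H →L[ℂ] H)} {e : H} {s t : ℝ}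

theorem inner_pow_apply_eq_coeff (hσ : IsSelfAdjoint σ) (hσv : Commute σ v)
    (hσw : σ * w = -(w * σ)) (hvwv : v * w * v = w) (hww : (w : H →L[ℂ] H) * w = -1)
    (he : σ e = e) (hne : ‖e‖ = 1)
    (horth : ∀ m : ℕ, 0 < m → ⟪((v : H →L[ℂ] H) ^ m) e, e⟫_ℂ = 0) (hst : s ^ 2 + t ^ 2 = 1)
    (ψ₁ ψ₂ : ℂ) (n : ℕ) (x : ℤ) :
    ⟪v ^ x • e, (((s : ℂ) • (v : H →L[ℂ] H) + (t : ℂ) • (w : H →L[ℂ] H)) ^ n)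
        (ψ₁ • e + ψ₂ • (v * w) • e)⟫_ℂ = ψ₁ * (pn1 s n).coeff x + ψ₂ * (qn1 s t n).coeff x ∧
      ⟪(v * w) • v ^ x • e, (((s : ℂ) • (v : H →L[ℂ] H) + (t : ℂ) • (w : H →L[ℂ] H)) ^ n)
        (ψ₁ • e + ψ₂ • (v * w) • e)⟫_ℂ = ψ₁ * (pn2 s t n).coeff x + ψ₂ * (qn2 s n).coeff x := by
  have hwalk := walkRecurrence_inner (e₁ := fun x => v ^ x • e) (e₂ := fun x => (v * w) • v ^ x • e)
    (adjoint_smul_add_smul_apply_zpow_smul hvwv s t e · hww)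
    (adjoint_smul_add_smul_apply_mul_zpow_smul hvwv s t e) (ψ₁ • e + ψ₂ • (v * w) • e)
  have hinit := inner_zpow_smul_smul_add_smul hσ hσv hσw he hne horth ψ₁ ψ₂
  obtain ⟨h₁, h₂⟩ := hwalk.eq_of_init_eq
    ((walkRecurrence_pn hst).linear_comb (walkRecurrence_qn hst) ψ₁ ψ₂)
    (funext fun x => by simp [(hinit x).1, pn1_zero, qn1_zero, LaurentPolynomial.coeff_one])
    (funext fun x => by simp [(hinit x).2, pn2_zero, qn2_zero, LaurentPolynomial.coeff_one]) n
  exact ⟨congrFun h₁ x, congrFun h₂ x⟩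

end Amplitudes

theorem norm_sq_mul_add_mul_of_im_eq_zero (ψ₁ ψ₂ : ℂ) {a c : ℂ} (ha : a.im = 0) (hc : c.im = 0) :
    ((‖ψ₁ * a + ψ₂ * c‖ ^ 2 : ℝ) : ℂ) = ((‖ψ₁‖ ^ 2 : ℝ) : ℂ) * a ^ 2 + ((‖ψ₂‖ ^ 2 : ℝ) : ℂ) * c ^ 2
      + ((2 * (ψ₁ * (starRingEnd ℂ) ψ₂).re : ℝ) : ℂ) * (a * c) := by
  lift a to ℝ using ha
  lift c to ℝ using hc
  have h : ‖ψ₁ * a + ψ₂ * c‖ ^ 2 =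
      ‖ψ₁‖ ^ 2 * a ^ 2 + ‖ψ₂‖ ^ 2 * c ^ 2 + 2 * (ψ₁ * (starRingEnd ℂ) ψ₂).re * (a * c) := by
    simp only [Complex.sq_norm, Complex.normSq_apply, Complex.add_re, Complex.add_im,
      Complex.mul_re, Complex.mul_im, Complex.ofReal_re, Complex.ofReal_im, Complex.conj_re,
      Complex.conj_im]
    ring
  rw [h]
  push_cast
  ring

theorem qw_probability_formula_general
    {H : Type*} [NormedAddCommGroup H] [InnerProductSpace ℂ H] [CompleteSpace H]
    (V W σ X Y T Pp ε : H →L[ℂ] H)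
    (hVu : adjoint V ∘L V = 1 ∧ V ∘L adjoint V = 1)
    (hWu : adjoint W ∘L W = 1 ∧ W ∘L adjoint W = 1)
    (hQW1 : W ∘L W = -1)
    (hQW2 : V ∘L W = W ∘L adjoint V)
    (hQW3W : σ ∘L W + W ∘L σ = 0)
    (hQW3V : σ ∘L V - V ∘L σ = 0)
    (hQW4 : adjoint σ = σ)
    (hX : X = (2 : ℂ)⁻¹ • (V + adjoint V))
    (hY : Y = (2 * Complex.I)⁻¹ • (V - adjoint V))
    (hT : T = X + Complex.I • (σ ∘L Y))
    (hPp : Pp = (2 : ℂ)⁻¹ • (1 + σ))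
    (hε : ε = V ∘L W)
    (e : H) (he : ‖e‖ = 1) (hePp : Pp e = e)
    (horth : ∀ m : ℕ, 0 < m → (inner ℂ ((V ^ m) e) e : ℂ) = 0)
    (Tu : (H →L[ℂ] H)ˣ) (hTu : (Tu : H →L[ℂ] H) = T)
    (e1 e2 : ℤ → H)
    (he1 : ∀ x : ℤ, e1 x = ((Tu ^ x : (H →L[ℂ] H)ˣ) : H →L[ℂ] H) e)
    (he2 : ∀ x : ℤ, e2 x = ((Tu ^ x : (H →L[ℂ] H)ˣ) : H →L[ℂ] H) (ε e))
    (s t : ℝ)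
    (hst : s ^ 2 + t ^ 2 = 1)
    (U : H →L[ℂ] H) (hU : U = (s : ℂ) • V + (t : ℂ) • W)
    (ψ₁ ψ₂ : ℂ)
    (Ψ : H) (hΨ : Ψ = ψ₁ • e1 0 + ψ₂ • e2 0)
    (q : ℕ → ℤ → ℝ)
    (hq : ∀ n x, q n x =
      ‖(inner ℂ (e1 x) ((U ^ n) Ψ) : ℂ)‖ ^ 2 + ‖(inner ℂ (e2 x) ((U ^ n) Ψ) : ℂ)‖ ^ 2) :
    (∀ (n : ℕ) (x : ℤ),
      ((pn1 s n).coeff x).im = 0 ∧ ((pn2 s t n).coeff x).im = 0 ∧ ((qn1 s t n).coeff x).im = 0 ∧ ((qn2 s n).coeff x).im = 0) ∧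
    (∀ (n : ℕ) (x : ℤ),
      ((q n x : ℝ) : ℂ) =
        ((‖ψ₁‖ ^ 2 : ℝ) : ℂ) * (((pn1 s n).coeff x) ^ 2 + ((pn2 s t n).coeff x) ^ 2) +
          ((‖ψ₂‖ ^ 2 : ℝ) : ℂ) * (((qn1 s t n).coeff x) ^ 2 + ((qn2 s n).coeff x) ^ 2) +
          ((2 * (ψ₁ * (starRingEnd ℂ) ψ₂).re : ℝ) : ℂ) *
            ((pn1 s n).coeff x * (qn1 s t n).coeff x + (pn2 s t n).coeff x * (qn2 s n).coeff x)) := by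
  refine ⟨coeff_im_eq_zero hst, fun n x => ?_⟩
  let v : unitary (H →L[ℂ] H) := ⟨V, hVu⟩
  let w : unitary (H →L[ℂ] H) := ⟨W, hWu⟩
  have hvwv : v * w * v = w := Subtype.ext <| by
    change V * W * V = W
    rw [show V * W = W * adjoint V from hQW2, mul_assoc, show adjoint V * V = 1 from hVu.1, mul_one]
  have hσv : Commute σ V := sub_eq_zero.mp hQW3V
  have hσw : σ * W = -(W * σ) := eq_neg_of_add_eq_zero_left hQW3W
  have hσe : σ e = e := by
    rw [hPp, smul_apply, add_apply, one_apply_eq_self] at hePp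
    linear_combination (norm := module) (2 : ℂ) • hePp
  have hTu' : (Tu : H →L[ℂ] H) = condShift σ V (adjoint V) := by rw [hTu, hT, hX, hY]; rfl
  have he₁ (x : ℤ) : e1 x = v ^ x • e :=
    (he1 x).trans (units_zpow_smul_of_apply_eq_self hTu' hσv hσe x)
  have he₂ (x : ℤ) : e2 x = (v * w) • v ^ x • e :=
    (he2 x).trans (hε ▸ units_zpow_smul_mul_smul hTu' hσv hvwv hσw hσe x)
  have hΨ' : Ψ = ψ₁ • e + ψ₂ • (v * w) • e := by rw [hΨ, he₁, he₂, zpow_zero, one_smul]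
  obtain ⟨h₁, h₂⟩ := inner_pow_apply_eq_coeff hQW4 hσv hσw hvwv hQW1 hσe he horth hst ψ₁ ψ₂ n x
  have hamp₁ : ⟪e1 x, (U ^ n) Ψ⟫_ℂ = ψ₁ * (pn1 s n).coeff x + ψ₂ * (qn1 s t n).coeff x := by
    rw [he₁, hU, hΨ']; exact h₁
  have hamp₂ : ⟪e2 x, (U ^ n) Ψ⟫_ℂ = ψ₁ * (pn2 s t n).coeff x + ψ₂ * (qn2 s n).coeff x := by
    rw [he₂, hU, hΨ']; exact h₂
  obtain ⟨hp₁, hp₂, hq₁, hq₂⟩ := coeff_im_eq_zero hst n x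
  rw [hq, hamp₁, hamp₂, Complex.ofReal_add, norm_sq_mul_add_mul_of_im_eq_zero ψ₁ ψ₂ hp₁ hq₁,
    norm_sq_mul_add_mul_of_im_eq_zero ψ₁ ψ₂ hp₂ hq₂]
  ring

/-- The Laurent polynomials `p_nⁱ`, `q_nⁱ` have real coefficients, and the transition
probability `q_n(ψ;x)` is expressed through their coefficients. -/
theorem qw_probability_formula
    {H : Type*} [NormedAddCommGroup H] [InnerProductSpace ℂ H] [CompleteSpace H]
    (V W σ X Y T Pp Pm ε : H →L[ℂ] H)
    (hVu : adjoint V ∘L V = 1 ∧ V ∘L adjoint V = 1)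
    (hWu : adjoint W ∘L W = 1 ∧ W ∘L adjoint W = 1)
    (hσu : adjoint σ ∘L σ = 1 ∧ σ ∘L adjoint σ = 1)
    (hQW1 : W ∘L W = -1)
    (hQW2 : V ∘L W = W ∘L adjoint V)
    (hQW3W : σ ∘L W + W ∘L σ = 0)
    (hQW3V : σ ∘L V - V ∘L σ = 0)
    (hQW4 : adjoint σ = σ)
    (hX : X = (2 : ℂ)⁻¹ • (V + adjoint V))
    (hY : Y = (2 * Complex.I)⁻¹ • (V - adjoint V))
    (hT : T = X + Complex.I • (σ ∘L Y))
    (hPp : Pp = (2 : ℂ)⁻¹ • (1 + σ))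
    (hPm : Pm = (2 : ℂ)⁻¹ • (1 - σ))
    (hε : ε = V ∘L W)
    (e : H) (he : ‖e‖ = 1) (hePp : Pp e = e)
    (horth : ∀ m : ℕ, 0 < m → (inner ℂ ((V ^ m) e) e : ℂ) = 0)
    (Tu : (H →L[ℂ] H)ˣ) (hTu : (Tu : H →L[ℂ] H) = T)
    (e1 e2 : ℤ → H)
    (he1 : ∀ x : ℤ, e1 x = ((Tu ^ x : (H →L[ℂ] H)ˣ) : H →L[ℂ] H) e)
    (he2 : ∀ x : ℤ, e2 x = ((Tu ^ x : (H →L[ℂ] H)ˣ) : H →L[ℂ] H) (ε e))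
    (s t : ℝ) (hs0 : 0 < s) (hs1 : s < 1) (ht0 : 0 < t) (ht1 : t < 1)
    (hst : s ^ 2 + t ^ 2 = 1)
    (U : H →L[ℂ] H) (hU : U = (s : ℂ) • V + (t : ℂ) • W)
    (ψ₁ ψ₂ : ℂ) (hψ : ‖ψ₁‖ ^ 2 + ‖ψ₂‖ ^ 2 = 1)
    (Ψ : H) (hΨ : Ψ = ψ₁ • e1 0 + ψ₂ • e2 0)
    (q : ℕ → ℤ → ℝ)
    (hq : ∀ n x, q n x =
      ‖(inner ℂ (e1 x) ((U ^ n) Ψ) : ℂ)‖ ^ 2 + ‖(inner ℂ (e2 x) ((U ^ n) Ψ) : ℂ)‖ ^ 2) :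
    (∀ (n : ℕ) (x : ℤ),
      ((pn1 s n).coeff x).im = 0 ∧ ((pn2 s t n).coeff x).im = 0 ∧ ((qn1 s t n).coeff x).im = 0 ∧ ((qn2 s n).coeff x).im = 0) ∧
    (∀ (n : ℕ) (x : ℤ),
      ((q n x : ℝ) : ℂ) =
        ((‖ψ₁‖ ^ 2 : ℝ) : ℂ) * (((pn1 s n).coeff x) ^ 2 + ((pn2 s t n).coeff x) ^ 2) +
          ((‖ψ₂‖ ^ 2 : ℝ) : ℂ) * (((qn1 s t n).coeff x) ^ 2 + ((qn2 s n).coeff x) ^ 2) +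
          ((2 * (ψ₁ * (starRingEnd ℂ) ψ₂).re : ℝ) : ℂ) *
            ((pn1 s n).coeff x * (qn1 s t n).coeff x + (pn2 s t n).coeff x * (qn2 s n).coeff x)) :=
  qw_probability_formula_general V W σ X Y T Pp ε hVu hWu hQW1 hQW2 hQW3W hQW3V hQW4 hX hY hT hPp hε
    e he hePp horth Tu hTu e1 e2 he1 he2 s t hst U hU ψ₁ ψ₂ Ψ hΨ q hq
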